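/- arXiv:math/0310335 — 2 statements merged into one kernel-verified Lean document; each statement's English description precedes it below -/
import Mathlib

section
/- Let A be a finite alphabet with at least two letters. If a maximal prefix code P over A contains a word of length n, then P contains at least n + 1 elements. -/
/-- A prefix code: no element is a strict prefix of another element. -/
def PrefixCode {α : Type*} (C : Set (List α)) : Prop :=
  ∀ u ∈ C, ∀ v ∈ C, u <+: v → u = v

/-- A maximal prefix code over the alphabet `α`:
a prefix code that is not a strict subset of any other prefix code. -/
def MaxPrefixCode {α : Type*} (C : Set (List α)) : Prop :=
  PrefixCode C ∧ ∀ D : Set (List α), PrefixCode D → C ⊆ D → D = C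

/-- The right ideal P·A* generated by a set of words P. -/
def rightIdeal {α : Type*} (P : Set (List α)) : Set (List α) :=
  {w | ∃ p ∈ P, p <+: w}

theorem statement5 {A : Type*} [Fintype A] (hA : 2 ≤ Fintype.card A)
    (P : Set (List A)) (hP : MaxPrefixCode P) (w : List A) (hw : w ∈ P) :
    ∃ S : Finset (List A), ↑S ⊆ P ∧ w.length + 1 ≤ S.card := by
  classical
  obtain ⟨hpc, hmax⟩ := hP
  set n := w.length with hn
  -- completeness of a maximal prefix code
  have hcomp : ∀ x : List A, ∃ p ∈ P, p <+: x ∨ x <+: p := by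
    intro x
    by_contra h
    push_neg at h
    have hD : PrefixCode (insert x P) := by
      intro u hu v hv huv
      rcases hu with rfl | hu
      · rcases hv with rfl | hv
        · rfl
        · exact absurd huv (h v hv).2
      · rcases hv with rfl | hv
        · exact absurd huv (h u hu).1
        · exact hpc u hu v hv huv
    have hPx := hmax _ hD (Set.subset_insert _ _)
    have hx : x ∈ P := hPx ▸ Set.mem_insert x P
    exact (h x hx).1 (List.prefix_refl x)
  -- a different letter
  have hb : ∀ a : A, ∃ c : A, c ≠ a := fun a =>
    Fintype.exists_ne_of_one_lt_card (by omega) a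
  choose b hbne using hb
  -- the diverted words
  have hget : ∀ i (hi : i < n), ∃ a : A, w.take (i+1) = w.take i ++ [a] ∧ a = w[i]'(by omega) := by
    intro i hi
    exact ⟨w[i]'(by omega), by
      rw [List.take_succ]
      have : w[i]? = some (w[i]'(by omega)) := List.getElem?_eq_getElem (by omega)
      rw [this]; rfl, rfl⟩
  -- u i : the word disagreeing with w at position i
  set u : ℕ → List A := fun i => if hi : i < n then w.take i ++ [b (w[i]'(by omega))] else [] with hu
  choose p hpP hpor using fun i => hcomp (u i)
  -- u i is a prefix of p i
  have hup : ∀ i, i < n → u i <+: p i := by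
    intro i hi
    rcases hpor i with hpre | hpre
    · have hui : u i = w.take i ++ [b (w[i]'(by omega))] := by simp [hu, hi]
      rw [hui] at hpre
      rcases List.prefix_concat_iff.mp hpre with heq | hpre'
      · rw [hui, heq]
      · -- p i <+: w.take i, so p i <+: w, so p i = w, contradicting lengths
        have hpw : p i <+: w := hpre'.trans (List.take_prefix i w)
        have := hpc _ (hpP i) _ hw hpw
        have hlen : (p i).length ≤ i := le_trans hpre'.length_le (by rw [List.length_take]; omega)
        rw [this] at hlen
        omega
    · exact hpre
  -- g : the n+1 elements
  set g : ℕ → List A := fun i => if i < n then p i else w with hg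
  have hgP : ∀ i, g i ∈ P := by
    intro i
    by_cases hi : i < n <;> simp [hg, hi, hpP, hw]
  -- each g j for i < j ≤ n has prefix w.take (i+1)
  have hgw : ∀ i j, i < j → j ≤ n → w.take (i+1) <+: g j := by
    intro i j hij hjn
    by_cases hj : j < n
    · have h1 : w.take (i+1) <+: w.take j := by
        have := List.take_prefix (i+1) (w.take j)
        rwa [List.take_take, min_eq_left (by omega)] at this
      have h2 : w.take j <+: u j := by
        simp only [hu, hj, dif_pos]
        exact ⟨_, rfl⟩
      simpa [hg, hj] using (h1.trans h2).trans (hup j hj)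
    · have : j = n := by omega
      subst this
      simp only [hg, lt_irrefl, if_neg (lt_irrefl n)]
      exact List.take_prefix _ _
  -- distinctness
  have hne : ∀ i j, i < j → j ≤ n → g i ≠ g j := by
    intro i j hij hjn heq
    have hi : i < n := by omega
    have h1 : u i <+: g j := by
      rw [← heq]; simpa [hg, hi] using hup i hi
    have h2 : w.take (i+1) <+: g j := hgw i j hij hjn
    have hlen : (u i).length = (w.take (i+1)).length := by
      obtain ⟨a, ha, _⟩ := hget i hi
      simp [hu, hi, ha]
    have : u i = w.take (i+1) := by
      rcases List.prefix_or_prefix_of_prefix h1 h2 with h | h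
      · exact h.eq_of_length hlen
      · exact (h.eq_of_length hlen.symm).symm
    obtain ⟨a, ha, ha'⟩ := hget i hi
    rw [ha] at this
    simp only [hu, hi, dif_pos, List.append_cancel_left_eq, List.cons.injEq] at this
    exact hbne _ (by rw [this.1, ha'])
  refine ⟨(Finset.range (n+1)).image g, ?_, ?_⟩
  · intro x hx
    simp only [Finset.coe_image, Set.mem_image] at hx
    obtain ⟨i, _, rfl⟩ := hx
    exact hgP i
  · rw [Finset.card_image_of_injOn, Finset.card_range]
    intro i hi j hj hij
    simp only [Finset.coe_range, Set.mem_Iio] at hi hj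
    by_contra hne'
    rcases lt_trichotomy i j with h | h | h
    · exact hne i j h (by omega) hij
    · exact hne' h
    · exact hne j i h (by omega) hij.symm
end

section
/- Let A be a finite alphabet with at least two letters, let D and I be maximal prefix codes over A, and let ψ : D → I be a bijection. Let P ⊆ A* be a prefix code. Assume: (i) for every x ∈ D, x ∈ P·A* if and only if ψ(x) ∈ P·A*; and (ii) every x ∈ D ∩ P·A* is prefix-comparable with ψ(x). Then ψ(x) = x for every x ∈ D ∩ P·A*. In particular, if every x ∈ D is prefix-comparable with ψ(x), then ψ is the identity map on D (and hence D = I). Contrapositively: if ψ is not the identity on D ∩ P·A* (while (i) holds), then there exists x ∈ D ∩ P·A* such that x and ψ(x) are prefix-incomparable. -/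
/-- Every word is prefix-comparable with some element of a maximal prefix code. -/
lemma maxPrefixCode_comp {α : Type*} {D : Set (List α)} (hD : MaxPrefixCode D)
    (w : List α) : ∃ d ∈ D, d <+: w ∨ w <+: d := by
  by_contra h
  push_neg at h
  have hpc : PrefixCode (insert w D) := by
    rintro u (rfl | hu) v (rfl | hv) huv
    · rfl
    · exact absurd huv (h v hv).2
    · exact absurd huv (h u hu).1
    · exact hD.1 u hu v hv huv
  have heq := hD.2 _ hpc (Set.subset_insert w D)
  have hw : w ∈ D := heq ▸ Set.mem_insert w D
  exact absurd (List.prefix_refl w) (h w hw).1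

/-- Key lemma: under the hypotheses, ψ x is never a strict prefix of x. -/
lemma key_lemma {A : Type*} [Fintype A] (hA : 2 ≤ Fintype.card A)
    {D I : Set (List A)} (hD : MaxPrefixCode D) (hI : PrefixCode I)
    {ψ : List A → List A} (hmap : Set.MapsTo ψ D I) (hinj : Set.InjOn ψ D)
    {P : Set (List A)}
    (hstab : ∀ x ∈ D, (x ∈ rightIdeal P ↔ ψ x ∈ rightIdeal P))
    (hcomp : ∀ x ∈ D ∩ rightIdeal P, x <+: ψ x ∨ ψ x <+: x)
    {x : List A} (hx : x ∈ D) (hxP : x ∈ rightIdeal P) :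
    ¬ (ψ x <+: x ∧ ψ x ≠ x) := by
  rintro ⟨hpre, hne⟩
  set u := ψ x with hu
  have huP : u ∈ rightIdeal P := (hstab x hx).1 hxP
  have huI : u ∈ I := hmap hx
  obtain ⟨s, hs⟩ := hpre
  cases s with
  | nil => exact hne (by simpa using hs)
  | cons a t =>
    obtain ⟨b, hb⟩ := Fintype.exists_ne_of_one_lt_card (by omega) a
    obtain ⟨d, hdD, hdc⟩ := maxPrefixCode_comp hD (u ++ [b])
    have hub : u ++ [b] <+: d := by
      rcases hdc with h1 | h2
      · by_cases hdeq : d = u ++ [b]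
        · exact hdeq ▸ List.prefix_refl _
        · have hlen1 : d.length ≤ u.length + 1 := by
            simpa using h1.length_le
          have hlen : d.length ≤ u.length := by
            rcases Nat.lt_or_ge d.length (u.length + 1) with h | h
            · omega
            · exact absurd (h1.eq_of_length (by simp; omega)) hdeq
          have hdu : d <+: u :=
            List.prefix_of_prefix_length_le h1 (List.prefix_append u [b]) hlen
          have hdx : d <+: x := hdu.trans ⟨a :: t, hs⟩
          have hdx' : d = x := hD.1 d hdD x hx hdx
          have : x.length ≤ u.length := hdx' ▸ hlen
          have : x.length = u.length + t.length + 1 := by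
            rw [← hs]; simp; omega
          omega
      · exact h2
    have hud : u <+: d := (List.prefix_append u [b]).trans hub
    have hdP : d ∈ rightIdeal P := by
      obtain ⟨p, hp, hpu⟩ := huP
      exact ⟨p, hp, hpu.trans hud⟩
    have hψd : ψ d = u := by
      rcases hcomp d ⟨hdD, hdP⟩ with h1 | h2
      · exact (hI u huI (ψ d) (hmap hdD) (hud.trans h1)).symm
      · rcases le_total (ψ d).length u.length with hl | hl
        · exact hI (ψ d) (hmap hdD) u huI
            (List.prefix_of_prefix_length_le h2 hud hl)
        · exact (hI u huI (ψ d) (hmap hdD)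
            (List.prefix_of_prefix_length_le hud h2 hl)).symm
    have hdx : d = x := hinj hdD hx (hψd.trans hu)
    subst hdx
    obtain ⟨r, hr⟩ := hub
    rw [List.append_assoc, ← hs] at hr
    have : b :: r = a :: t := List.append_cancel_left hr
    exact hb (by injection this)

/-- Main lemma: ψ fixes every element of D ∩ P·A*. -/
lemma main_lemma {A : Type*} [Fintype A] (hA : 2 ≤ Fintype.card A)
    (D I : Set (List A)) (hD : MaxPrefixCode D) (hI : MaxPrefixCode I)
    (ψ : List A → List A) (hbij : Set.BijOn ψ D I)
    (P : Set (List A))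
    (hstab : ∀ x ∈ D, (x ∈ rightIdeal P ↔ ψ x ∈ rightIdeal P))
    (hcomp : ∀ x ∈ D ∩ rightIdeal P, x <+: ψ x ∨ ψ x <+: x) :
    ∀ x ∈ D ∩ rightIdeal P, ψ x = x := by
  rintro x ⟨hxD, hxP⟩
  have h1 := key_lemma hA hD hI.1 hbij.mapsTo hbij.injOn hstab hcomp hxD hxP
  -- the inverse map
  set φ := Function.invFunOn ψ D with hφ
  have hinv : Set.InvOn φ ψ D I := hbij.invOn_invFunOn
  have hφbij : Set.BijOn φ I D := Set.InvOn.bijOn hinv.symm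
    (hbij.surjOn.mapsTo_invFunOn) hbij.mapsTo
  have hφstab : ∀ y ∈ I, (y ∈ rightIdeal P ↔ φ y ∈ rightIdeal P) := by
    intro y hy
    have hd : φ y ∈ D := hφbij.mapsTo hy
    have heq : ψ (φ y) = y := hinv.2 hy
    have h := (hstab _ hd).symm
    rw [heq] at h
    exact h
  have hφcomp : ∀ y ∈ I ∩ rightIdeal P, y <+: φ y ∨ φ y <+: y := by
    rintro y ⟨hyI, hyP⟩
    have hd : φ y ∈ D := hφbij.mapsTo hyI
    have heq : ψ (φ y) = y := hinv.2 hyI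
    have hdP : φ y ∈ rightIdeal P := (hφstab y hyI).1 hyP
    rcases hcomp (φ y) ⟨hd, hdP⟩ with h | h
    · rw [heq] at h; exact Or.inr h
    · rw [heq] at h; exact Or.inl h
  have h2 := key_lemma hA hI hD.1 hφbij.mapsTo hφbij.injOn hφstab hφcomp
    (hbij.mapsTo hxD) ((hstab x hxD).1 hxP)
  rw [hinv.1 hxD] at h2
  by_contra hne
  rcases hcomp x ⟨hxD, hxP⟩ with hc | hc
  · exact h2 ⟨hc, fun h => hne h.symm⟩
  · exact h1 ⟨hc, hne⟩

theorem statement6 {A : Type*} [Fintype A] (hA : 2 ≤ Fintype.card A)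
    (D I : Set (List A)) (hD : MaxPrefixCode D) (hI : MaxPrefixCode I)
    (ψ : List A → List A) (hbij : Set.BijOn ψ D I)
    (P : Set (List A)) (hP : PrefixCode P)
    (hstab : ∀ x ∈ D, (x ∈ rightIdeal P ↔ ψ x ∈ rightIdeal P))
    (hcomp : ∀ x ∈ D ∩ rightIdeal P, x <+: ψ x ∨ ψ x <+: x) :
    (∀ x ∈ D ∩ rightIdeal P, ψ x = x) ∧
    ((∀ x ∈ D, x <+: ψ x ∨ ψ x <+: x) → (∀ x ∈ D, ψ x = x) ∧ D = I) := by
  constructor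
  · exact main_lemma hA D I hD hI ψ hbij P hstab hcomp
  · intro hcall
    have hmem : ∀ w : List A, w ∈ rightIdeal {([] : List A)} :=
      fun w => ⟨[], rfl, List.nil_prefix⟩
    have hall : ∀ x ∈ D, ψ x = x := by
      intro x hx
      exact main_lemma hA D I hD hI ψ hbij {([] : List A)}
        (fun x hx => ⟨fun _ => hmem _, fun _ => hmem _⟩)
        (fun x hx => hcall x hx.1) x ⟨hx, hmem x⟩
    refine ⟨hall, ?_⟩
    have himg : ψ '' D = D := by rw [Set.image_congr hall, Set.image_id']
    exact himg.symm.trans hbij.image_eq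
end
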